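/- The graph obtained from K_{1,4}^* (the star K_{1,4} with one extra edge between two leaves) by adding a new vertex adjacent to the center's neighbor of degree 2 is a mixed unit interval graph but is not a graph representable by only closed and open unit intervals. Concretely: the graph with vertices c, a, b, d, e, f and edges ca, cb, cd, ce, ab, af is a mixed unit interval graph, but it contains an induced K_{1,4}^* and hence admits no intersection representation using only closed and only open unit intervals. -/
import Mathlib


open Set

/-- A unit interval of the real line: one of the four types of intervals of length 1. -/
def IsUnitInterval (s : Set ℝ) : Prop :=
  ∃ x : ℝ, s = Set.Icc x (x + 1) ∨ s = Set.Ioo x (x + 1) ∨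
    s = Set.Ioc x (x + 1) ∨ s = Set.Ico x (x + 1)

/-- `f` is an intersection representation of `G`: distinct vertices are adjacent iff
their assigned sets intersect. -/
def IsIntervalRep {V : Type*} (G : SimpleGraph V) (f : V → Set ℝ) : Prop :=
  ∀ u v : V, u ≠ v → (G.Adj u v ↔ (f u ∩ f v).Nonempty)

/-- A mixed unit interval graph: intersection graph of unit intervals of any of the four types. -/
def MixedUnitIntervalGraph {V : Type*} (G : SimpleGraph V) : Prop :=
  ∃ f : V → Set ℝ, IsIntervalRep G f ∧ ∀ v, IsUnitInterval (f v)

/-- `G` contains an induced subgraph isomorphic to `H`. -/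
def HasInducedSubgraph {V W : Type*} (G : SimpleGraph V) (H : SimpleGraph W) : Prop :=
  ∃ f : W ↪ V, ∀ a b : W, H.Adj a b ↔ G.Adj (f a) (f b)

/-- `G` is an interval graph (intersection graph of closed real intervals). -/
def IsIntervalGraph {V : Type*} (G : SimpleGraph V) : Prop :=
  ∃ f : V → Set ℝ, IsIntervalRep G f ∧ ∀ v, ∃ a b : ℝ, f v = Set.Icc a b

/-- `G` is twin-free: distinct vertices have distinct closed neighborhoods. -/
def TwinFree {V : Type*} (G : SimpleGraph V) : Prop :=
  ∀ u v : V, insert u (G.neighborSet u) = insert v (G.neighborSet v) → u = v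

/-- The graph with vertices c = 0, a = 1, b = 2, d = 3, e = 4, f = 5 and edges
ca, cb, cd, ce, ab, af. -/
def G18 : SimpleGraph (Fin 6) := SimpleGraph.fromRel (fun u v =>
  (u = 0 ∧ (v = 1 ∨ v = 2 ∨ v = 3 ∨ v = 4)) ∨ (u = 1 ∧ (v = 2 ∨ v = 5)))

/-- K_{1,4}^*: the star with center 0 and leaves 1,2,3,4, plus the edge 12. -/
def K14star : SimpleGraph (Fin 5) := SimpleGraph.fromRel (fun u v =>
  (u = 0 ∧ v ≠ 0) ∨ (u = 1 ∧ v = 2))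


def URel (x y : ℝ) (kx ky : Bool) : Prop :=
  (y < x + 1 ∧ x < y + 1) ∨ (kx = true ∧ ky = true ∧ (x = y + 1 ∨ y = x + 1))

def UI (x : ℝ) (k : Bool) : Set ℝ := if k then Set.Icc x (x + 1) else Set.Ioo x (x + 1)

lemma mem_aux {x y : ℝ} (h1 : y < x + 1) (h2 : x < y + 1) :
    ∃ p, x < p ∧ p < x + 1 ∧ y < p ∧ p < y + 1 := by
  have h3 : max x y < min (x + 1) (y + 1) := by
    apply max_lt <;> apply lt_min <;> linarith
  have h4 := le_max_left x y
  have h5 := le_max_right x y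
  have h6 := min_le_left (x + 1) (y + 1)
  have h7 := min_le_right (x + 1) (y + 1)
  exact ⟨(max x y + min (x + 1) (y + 1)) / 2, by linarith, by linarith, by linarith, by linarith⟩

lemma UI_inter (x y : ℝ) (k l : Bool) :
    (UI x k ∩ UI y l).Nonempty ↔ URel x y k l := by
  cases k <;> cases l <;> simp only [UI, URel, if_true, if_false, Bool.false_eq_true,
    false_and, and_false, or_false, true_and, Bool.true_eq_false] <;>
    constructor
  · rintro ⟨p, ⟨h1, h2⟩, ⟨h3, h4⟩⟩; exact ⟨by linarith, by linarith⟩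
  · rintro ⟨h1, h2⟩
    obtain ⟨p, hp1, hp2, hp3, hp4⟩ := mem_aux h1 h2
    exact ⟨p, ⟨hp1, hp2⟩, ⟨hp3, hp4⟩⟩
  · rintro ⟨p, ⟨h1, h2⟩, ⟨h3, h4⟩⟩; exact ⟨by linarith, by linarith⟩
  · rintro ⟨h1, h2⟩
    obtain ⟨p, hp1, hp2, hp3, hp4⟩ := mem_aux h1 h2
    exact ⟨p, ⟨hp1, hp2⟩, ⟨le_of_lt hp3, le_of_lt hp4⟩⟩
  · rintro ⟨p, ⟨h1, h2⟩, ⟨h3, h4⟩⟩; exact ⟨by linarith, by linarith⟩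
  · rintro ⟨h1, h2⟩
    obtain ⟨p, hp1, hp2, hp3, hp4⟩ := mem_aux h1 h2
    exact ⟨p, ⟨le_of_lt hp1, le_of_lt hp2⟩, ⟨hp3, hp4⟩⟩
  · rintro ⟨p, ⟨h1, h2⟩, ⟨h3, h4⟩⟩
    rcases eq_or_lt_of_le (show x ≤ y + 1 by linarith) with h | h
    · exact Or.inr (Or.inl h)
    rcases eq_or_lt_of_le (show y ≤ x + 1 by linarith) with h' | h'
    · exact Or.inr (Or.inr h')
    · exact Or.inl ⟨h', h⟩
  · rintro (⟨h1, h2⟩ | h | h)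
    · obtain ⟨p, hp1, hp2, hp3, hp4⟩ := mem_aux h1 h2
      exact ⟨p, ⟨le_of_lt hp1, le_of_lt hp2⟩, ⟨le_of_lt hp3, le_of_lt hp4⟩⟩
    · exact ⟨x, ⟨le_refl _, by linarith⟩, ⟨by linarith, by linarith⟩⟩
    · exact ⟨y, ⟨by linarith, by linarith⟩, ⟨le_refl _, by linarith⟩⟩

lemma urel_symm {x y : ℝ} {kx ky : Bool} (h : URel x y kx ky) : URel y x ky kx := by
  rcases h with ⟨h1, h2⟩ | ⟨h1, h2, h3 | h3⟩
  · exact Or.inl ⟨h2, h1⟩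
  · exact Or.inr ⟨h2, h1, Or.inr h3⟩
  · exact Or.inr ⟨h2, h1, Or.inl h3⟩

lemma urel_weak {x y : ℝ} {kx ky : Bool} (h : URel x y kx ky) : y ≤ x + 1 ∧ x ≤ y + 1 := by
  rcases h with ⟨h1, h2⟩ | ⟨_, _, h | h⟩ <;> constructor <;> linarith

lemma not_urel_far {x y : ℝ} {kx ky : Bool} (h : ¬ URel x y kx ky) : y + 1 ≤ x ∨ x + 1 ≤ y := by
  by_contra hc
  push_neg at hc
  exact h (Or.inl ⟨by linarith [hc.1], by linarith [hc.2]⟩)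

lemma aux {c a b d e p : ℝ} {kc ka kb kd ke kp : Bool}
    (hde : d ≤ e)
    (Eca : URel c a kc ka) (Ecb : URel c b kc kb) (Ecd : URel c d kc kd) (Ece : URel c e kc ke)
    (Eap : URel a p ka kp)
    (Ncp : ¬ URel c p kc kp) (Nad : ¬ URel a d ka kd) (Nae : ¬ URel a e ka ke)
    (Nbd : ¬ URel b d kb kd) (Nbe : ¬ URel b e kb ke) (Nbp : ¬ URel b p kb kp)
    (Nde : ¬ URel d e kd ke) : False := by
  obtain ⟨wca1, wca2⟩ := urel_weak Eca
  obtain ⟨wcb1, wcb2⟩ := urel_weak Ecb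
  obtain ⟨wcd1, wcd2⟩ := urel_weak Ecd
  obtain ⟨wce1, wce2⟩ := urel_weak Ece
  obtain ⟨wap1, wap2⟩ := urel_weak Eap
  have hde1 : d + 1 ≤ e := by rcases not_urel_far Nde with h | h <;> linarith
  rcases not_urel_far Nad with had | had
  · -- Case B : d + 1 ≤ a
    rcases not_urel_far Nae with hae | hae
    · -- Case B1 : e + 1 ≤ a
      have he : e = c := by linarith
      have ha2 : a = c + 1 := by linarith
      have hd2 : d = c - 1 := by linarith
      rcases Eca with ⟨h1, h2⟩ | ⟨hkc, hka, _⟩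
      · linarith
      have hb : b = c + 1 := by
        rcases not_urel_far Nbe with h | h
        · linarith
        · rcases not_urel_far Nbd with h' | h' <;> linarith
      rcases Ecb with ⟨h1, h2⟩ | ⟨_, hkb, _⟩
      · linarith
      have hp : p = a - 1 ∨ p = a + 1 := by
        rcases not_urel_far Nbp with h | h
        · left; linarith
        · right; linarith
      rcases Eap with ⟨h1, h2⟩ | ⟨_, hkp, _⟩
      · rcases hp with h | h <;> linarith
      exact Nbp (Or.inr ⟨hkb, hkp, by rcases hp with h | h; exacts [Or.inl (by linarith), Or.inr (by linarith)]⟩)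
    · -- Case B2 : a + 1 ≤ e
      have ha : a = c := by linarith
      have hd : d = c - 1 := by linarith
      rcases Ecd with ⟨h1, h2⟩ | ⟨hkc, hkd, _⟩
      · linarith
      have hka : ka = false := by
        cases h' : ka
        · rfl
        · exact absurd (Or.inr ⟨h', hkd, Or.inl (by linarith)⟩) Nad
      have hp : p = a - 1 ∨ p = a + 1 := by
        rcases not_urel_far Ncp with h | h
        · left; linarith
        · right; linarith
      rcases Eap with ⟨h1, h2⟩ | ⟨hka2, _, _⟩
      · rcases hp with h | h <;> linarith
      · rw [hka] at hka2; exact absurd hka2 (by simp)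
  · -- Case A : a + 1 ≤ d
    have ha : a = c - 1 := by linarith
    have hd : d = c := by linarith
    have he : e = c + 1 := by linarith
    rcases Eca with ⟨h1, h2⟩ | ⟨hkc, hka, _⟩
    · linarith
    have hb : b = c - 1 := by
      rcases not_urel_far Nbe with h | h
      · linarith
      · rcases not_urel_far Nbd with h' | h' <;> linarith
    rcases Ecb with ⟨h1, h2⟩ | ⟨_, hkb, _⟩
    · linarith
    have hp : p = a - 1 ∨ p = a + 1 := by
      rcases not_urel_far Nbp with h | h
      · left; linarith
      · right; linarith
    rcases Eap with ⟨h1, h2⟩ | ⟨_, hkp, _⟩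
    · rcases hp with h | h <;> linarith
    exact Nbp (Or.inr ⟨hkb, hkp, by rcases hp with h | h; exacts [Or.inl (by linarith), Or.inr (by linarith)]⟩)

instance : DecidableRel G18.Adj := fun u v =>
  decidable_of_iff _ (SimpleGraph.fromRel_adj _ u v).symm

instance : DecidableRel K14star.Adj := fun u v =>
  decidable_of_iff _ (SimpleGraph.fromRel_adj _ u v).symm

def repF (v : Fin 6) : Set ℝ :=
  if v.val = 0 then Set.Icc 0 1 else if v.val = 1 then Set.Icc (-1) 0
  else if v.val = 2 then Set.Ioc (-1) 0 else if v.val = 3 then Set.Ioo 0 1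
  else if v.val = 4 then Set.Icc 1 2 else Set.Icc (-2) (-1)

/-- G18 is a mixed unit interval graph; it contains an induced K_{1,4}^* and admits no
intersection representation using only closed and open unit intervals. -/
theorem mixed_strictly_larger :
    MixedUnitIntervalGraph G18 ∧ HasInducedSubgraph G18 K14star ∧
      ¬ ∃ f : Fin 6 → Set ℝ, IsIntervalRep G18 f ∧
          ∀ v, (∃ x : ℝ, f v = Set.Icc x (x + 1)) ∨ (∃ x : ℝ, f v = Set.Ioo x (x + 1)) := by
  refine ⟨⟨repF, ?_, ?_⟩, ⟨Fin.castLEEmb (by norm_num : 5 ≤ 6), by decide⟩, ?_⟩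
  · intro u v huv
    fin_cases u <;> fin_cases v <;>
      first
        | exact absurd rfl huv
        | ((refine iff_of_false ?_ ?_) <;>
            first
              | decide
              | (rintro ⟨p, hp, hq⟩; norm_num [repF] at hp hq;
                 linarith [hp.1, hp.2, hq.1, hq.2]))
        | ((refine iff_of_true ?_ ⟨0, ?_⟩) <;> first | decide | (norm_num [repF]; done))
        | ((refine iff_of_true ?_ ⟨1, ?_⟩) <;> first | decide | (norm_num [repF]; done))
        | ((refine iff_of_true ?_ ⟨-1, ?_⟩) <;> first | decide | (norm_num [repF]; done))
        | ((refine iff_of_true ?_ ⟨1/2, ?_⟩) <;> first | decide | (norm_num [repF]; done))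
  · intro v
    fin_cases v <;> norm_num [repF]
    · exact ⟨0, Or.inl (by norm_num)⟩
    · exact ⟨-1, Or.inl (by norm_num)⟩
    · exact ⟨-1, Or.inr (Or.inr (Or.inl (by norm_num)))⟩
    · exact ⟨0, Or.inr (Or.inl (by norm_num))⟩
    · exact ⟨1, Or.inl (by norm_num)⟩
    · exact ⟨-2, Or.inl (by norm_num)⟩
  · rintro ⟨f, hrep, htypes⟩
    have hUI : ∀ v, ∃ xk : ℝ × Bool, f v = UI xk.1 xk.2 := by
      intro v
      rcases htypes v with ⟨x, hx⟩ | ⟨x, hx⟩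
      · exact ⟨(x, true), by simpa [UI] using hx⟩
      · exact ⟨(x, false), by simpa [UI] using hx⟩
    choose g hg using hUI
    have key : ∀ u v : Fin 6, u ≠ v →
        (G18.Adj u v ↔ URel (g u).1 (g v).1 (g u).2 (g v).2) := by
      intro u v huv
      rw [hrep u v huv, hg u, hg v, UI_inter]
    have A01 := (key 0 1 (by decide)).mp (by decide)
    have A02 := (key 0 2 (by decide)).mp (by decide)
    have A03 := (key 0 3 (by decide)).mp (by decide)
    have A04 := (key 0 4 (by decide)).mp (by decide)
    have A15 := (key 1 5 (by decide)).mp (by decide)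
    have N05 : ¬ URel (g 0).1 (g 5).1 (g 0).2 (g 5).2 :=
      fun h => (by decide : ¬ G18.Adj 0 5) ((key 0 5 (by decide)).mpr h)
    have N13 : ¬ URel (g 1).1 (g 3).1 (g 1).2 (g 3).2 :=
      fun h => (by decide : ¬ G18.Adj 1 3) ((key 1 3 (by decide)).mpr h)
    have N14 : ¬ URel (g 1).1 (g 4).1 (g 1).2 (g 4).2 :=
      fun h => (by decide : ¬ G18.Adj 1 4) ((key 1 4 (by decide)).mpr h)
    have N23 : ¬ URel (g 2).1 (g 3).1 (g 2).2 (g 3).2 :=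
      fun h => (by decide : ¬ G18.Adj 2 3) ((key 2 3 (by decide)).mpr h)
    have N24 : ¬ URel (g 2).1 (g 4).1 (g 2).2 (g 4).2 :=
      fun h => (by decide : ¬ G18.Adj 2 4) ((key 2 4 (by decide)).mpr h)
    have N25 : ¬ URel (g 2).1 (g 5).1 (g 2).2 (g 5).2 :=
      fun h => (by decide : ¬ G18.Adj 2 5) ((key 2 5 (by decide)).mpr h)
    have N34 : ¬ URel (g 3).1 (g 4).1 (g 3).2 (g 4).2 :=
      fun h => (by decide : ¬ G18.Adj 3 4) ((key 3 4 (by decide)).mpr h)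
    rcases le_total (g 3).1 (g 4).1 with h | h
    · exact aux h A01 A02 A03 A04 A15 N05 N13 N14 N23 N24 N25 N34
    · exact aux h A01 A02 A04 A03 A15 N05 N14 N13 N24 N23 N25
        (fun hr => N34 (urel_symm hr))
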